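/- (Basis) Let X be a random variable with support N_n = {1,…,n} and p_1 ≥ … ≥ p_n > 0, and let (A_⟨α⟩, ⟨α⟩ ∈ Ω) be its binary partition random variables. Then for every ⟨α⟩ ∈ Ω there exist ⟨β_1⟩, …, ⟨β_{n−2}⟩ ∈ Ω such that H(A_⟨β_k⟩ | A_⟨α⟩, A_⟨β_1⟩, …, A_⟨β_{k−1}⟩) > 0 for all k = 1, …, n−2. -/

import Mathlib

open scoped BigOperators

/-- Probability of an event under a pmf `μ` on a finite outcome space. -/
noncomputable def probOf {Ω : Type*} [Fintype Ω] (μ : Ω → ℝ) (E : Set Ω) : ℝ :=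
  ∑ ω, E.indicator μ ω

/-- Shannon entropy (in bits) of the random variable `X` on the finite
probability space `(Ω, μ)`. -/
noncomputable def shEntropy {Ω : Type*} {S : Type*} [Fintype Ω] (μ : Ω → ℝ) (X : Ω → S) : ℝ :=
  ∑ ω, μ ω * (- Real.logb 2 (probOf μ {ω' | X ω' = X ω}))

/-- Conditional Shannon entropy `H(Y | X)` (in bits). -/
noncomputable def shCondEntropy {Ω S T : Type*} [Fintype Ω] (μ : Ω → ℝ)
    (Y : Ω → T) (X : Ω → S) : ℝ :=
  shEntropy μ (fun ω => (X ω, Y ω)) - shEntropy μ X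

/-- The support of the random variable `X` (values taken with positive probability). -/
noncomputable def rvSupport {Ω S : Type*} [Fintype Ω] (μ : Ω → ℝ) (X : Ω → S) : Finset S := by
  classical exact (Finset.univ.filter fun ω => 0 < μ ω).image X

/-- `μ` is a probability mass function. -/
def IsPMF {Ω : Type*} [Fintype Ω] (μ : Ω → ℝ) : Prop :=
  (∀ ω, 0 ≤ μ ω) ∧ ∑ ω, μ ω = 1

/-- A polymatroid on the finite ground set `Z`. -/
def IsPolymatroid {Z : Type*} [DecidableEq Z] (h : Finset Z → ℝ) : Prop :=
  h ∅ = 0 ∧ (∀ A : Finset Z, 0 ≤ h A) ∧ (∀ A B : Finset Z, A ⊆ B → h A ≤ h B) ∧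
    ∀ A B : Finset Z, h (A ∩ B) + h (A ∪ B) ≤ h A + h B

/-- The binary partition random variable `A_⟨α⟩` of a random variable on
`Fin n` (the probability space is taken to be `Fin n` itself, with `X` the
identity): `A_⟨α⟩` records whether `X ∈ α` or `X ∈ αᶜ`.  Unordered partitions
`⟨α⟩ = {α, αᶜ}` are represented by the part `α` not containing the first
element `0` (the paper's convention `1 ∉ α`). -/
def bpVar {n : ℕ} (α : Finset (Fin n)) : Fin n → Bool := fun x => decide (x ∈ α)

/-!
Fix `m ∈ α`; since `0 ∉ α`, the points `0` and `m` represent the two sides of `⟨α⟩`.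
Enumerate the remaining `n - 2` points as `x_1, …, x_{n-2}` and take `β_k = {x_k}`.
The point `x_k` and the representative of its side of `⟨α⟩` lie in no earlier `β_j`,
so they agree on `A_⟨α⟩, A_⟨β_1⟩, …, A_⟨β_{k-1}⟩` but are separated by `A_⟨β_k⟩`;
on a space of full support, two such points force a positive conditional entropy.
-/

open Finset

section Entropy

variable {Ω S T : Type*} [Fintype Ω] {μ : Ω → ℝ}

lemma probOf_mono (hμ : ∀ ω, 0 ≤ μ ω) {E F : Set Ω} (hEF : E ⊆ F) :
    probOf μ E ≤ probOf μ F :=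
  sum_le_sum fun ω _ => Set.indicator_le_indicator_apply_of_subset hEF (hμ ω)

lemma probOf_lt_probOf (hμ : ∀ ω, 0 < μ ω) {E F : Set Ω} (hEF : E ⊆ F) {ω : Ω}
    (hωF : ω ∈ F) (hωE : ω ∉ E) : probOf μ E < probOf μ F := by
  refine sum_lt_sum (fun ω' _ => Set.indicator_le_indicator_apply_of_subset hEF (hμ ω').le)
    ⟨ω, mem_univ ω, ?_⟩
  rw [Set.indicator_of_notMem hωE, Set.indicator_of_mem hωF]
  exact hμ ω

lemma probOf_pos (hμ : ∀ ω, 0 < μ ω) {E : Set Ω} {ω : Ω} (hω : ω ∈ E) :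
    0 < probOf μ E := by
  simpa [probOf] using probOf_lt_probOf hμ (Set.empty_subset E) hω (Set.notMem_empty ω)

lemma shCondEntropy_eq_sum (Y : Ω → T) (X : Ω → S) :
    shCondEntropy μ Y X = ∑ ω, μ ω * (Real.logb 2 (probOf μ {ω' | X ω' = X ω}) -
      Real.logb 2 (probOf μ {ω' | (X ω', Y ω') = (X ω, Y ω)})) := by
  unfold shCondEntropy shEntropy
  rw [← sum_sub_distrib]
  exact sum_congr rfl fun ω _ => by ring

lemma shCondEntropy_pos_of_witness (hμ : ∀ ω, 0 < μ ω) {X : Ω → S} {Y : Ω → T}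
    {ω₁ ω₂ : Ω} (hX : X ω₁ = X ω₂) (hY : Y ω₁ ≠ Y ω₂) :
    0 < shCondEntropy μ Y X := by
  have hsub : ∀ ω, {ω' | (X ω', Y ω') = (X ω, Y ω)} ⊆ {ω' | X ω' = X ω} :=
    fun ω ω' h => congrArg Prod.fst h
  have hlog_le : ∀ ω, Real.logb 2 (probOf μ {ω' | (X ω', Y ω') = (X ω, Y ω)}) ≤
      Real.logb 2 (probOf μ {ω' | X ω' = X ω}) := fun ω =>
    Real.logb_le_logb_of_le one_lt_two (probOf_pos hμ rfl)
      (probOf_mono (fun ω' => (hμ ω').le) (hsub ω))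
  have hlog_lt : Real.logb 2 (probOf μ {ω' | (X ω', Y ω') = (X ω₁, Y ω₁)}) <
      Real.logb 2 (probOf μ {ω' | X ω' = X ω₁}) :=
    Real.logb_lt_logb one_lt_two (probOf_pos hμ rfl)
      (probOf_lt_probOf hμ (hsub ω₁) (ω := ω₂) hX.symm
        fun h => hY (congrArg Prod.snd h).symm)
  rw [shCondEntropy_eq_sum]
  refine sum_pos' (fun ω _ => mul_nonneg (hμ ω).le (sub_nonneg.mpr (hlog_le ω)))
    ⟨ω₁, mem_univ ω₁, mul_pos (hμ ω₁) (sub_pos.mpr hlog_lt)⟩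

end Entropy

lemma exists_mem_pair_mem_iff {ι : Type*} [DecidableEq ι] {α : Finset ι} {a b : ι}
    (ha : a ∉ α) (hb : b ∈ α) (x : ι) : ∃ y ∈ ({a, b} : Finset ι), (y ∈ α ↔ x ∈ α) := by
  by_cases hx : x ∈ α
  · exact ⟨b, by simp, iff_of_true hb hx⟩
  · exact ⟨a, by simp, iff_of_false ha hx⟩

theorem bpVar_basis_general {n : ℕ} [NeZero n]
    (p : Fin n → ℝ) (hp : ∀ i, 0 < p i)
    (α : Finset (Fin n)) (hαne : α.Nonempty) (hα0 : 0 ∉ α) :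
    ∃ β : Fin (n - 2) → Finset (Fin n),
      (∀ k, (β k).Nonempty ∧ 0 ∉ β k) ∧
      ∀ k : Fin (n - 2),
        0 < shCondEntropy p (bpVar (β k))
          (fun x => (bpVar α x, fun j : Fin k.1 => bpVar (β (Fin.castLE k.2.le j)) x)) := by
  obtain ⟨m, hm⟩ := hαne
  have hcard : ({0, m} : Finset (Fin n))ᶜ.card = n - 2 := by
    rw [card_compl, Fintype.card_fin, card_pair (by rintro rfl; exact hα0 hm)]
  let pt : Fin (n - 2) → Fin n := fun k =>
    (({0, m} : Finset (Fin n))ᶜ.orderIsoOfFin hcard k : Fin n)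
  have hpt_inj : Function.Injective pt := Subtype.val_injective.comp (OrderIso.injective _)
  have hpt_mem : ∀ k, pt k ∉ ({0, m} : Finset (Fin n)) := fun k => mem_compl.mp (Subtype.prop _)
  refine ⟨fun k => {pt k}, fun k => ⟨singleton_nonempty _, ?_⟩, fun k => ?_⟩
  · exact fun h => hpt_mem k (by simp [mem_singleton.mp h])
  obtain ⟨y, hy, hyα⟩ := exists_mem_pair_mem_iff hα0 hm (pt k)
  refine shCondEntropy_pos_of_witness hp (ω₁ := pt k) (ω₂ := y) ?_ ?_
  · refine Prod.ext (by simp [bpVar, hyα]) (funext fun j => ?_)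
    have hj : pt (Fin.castLE k.2.le j) ≠ pt k :=
      hpt_inj.ne (Fin.ne_of_val_ne (Nat.ne_of_lt j.2))
    have hyj : y ≠ pt (Fin.castLE k.2.le j) := fun h => hpt_mem _ (h ▸ hy)
    simp [bpVar, hj.symm, hyj]
  · have hyk : y ≠ pt k := fun h => hpt_mem k (h ▸ hy)
    simp [bpVar, hyk]

/-- Basis, Lemma 6(3): for a random variable with support
`{1, …, n}` and masses `p_1 ≥ … ≥ p_n > 0`, for every partition `⟨α⟩` there
are partitions `⟨β_1⟩, …, ⟨β_{n-2}⟩` with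
`H(A_⟨β_k⟩ | A_⟨α⟩, A_⟨β_1⟩, …, A_⟨β_{k-1}⟩) > 0` for all `k = 1, …, n-2`. -/
theorem bpVar_basis {n : ℕ} [NeZero n]
    (p : Fin n → ℝ) (hp : ∀ i, 0 < p i) (hsum : ∑ i, p i = 1)
    (hmono : ∀ i j : Fin n, i ≤ j → p j ≤ p i)
    (α : Finset (Fin n)) (hαne : α.Nonempty) (hα0 : 0 ∉ α) :
    ∃ β : Fin (n - 2) → Finset (Fin n),
      (∀ k, (β k).Nonempty ∧ 0 ∉ β k) ∧
      ∀ k : Fin (n - 2),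
        0 < shCondEntropy p (bpVar (β k))
          (fun x => (bpVar α x, fun j : Fin k.1 => bpVar (β (Fin.castLE k.2.le j)) x)) :=
  bpVar_basis_general p hp α hαne hα0
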